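/- For each δ > 0 there is a constant C such that for all λ ∈ [δ, 1−δ] and all sufficiently large t > 0, one has t·|α_{[tλ]}(t)|² ≤ C, where α_n(t) = 2(-i)^n((n+1)/t)J_{n+1}(t). -/

import Mathlib

open scoped Real

/-- Bessel function of the first kind of integer order `n`. -/
noncomputable def besselJ (n : ℕ) (t : ℝ) : ℝ :=
  (1 / π) * ∫ θ in (0:ℝ)..π, Real.cos (t * Real.sin θ - n * θ)

/-- `α_n(t) = 2 (-i)^n ((n+1)/t) J_{n+1}(t)`. -/
noncomputable def besselAlpha (n : ℕ) (t : ℝ) : ℂ :=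
  2 * (-Complex.I) ^ n * (((n : ℂ) + 1) / (t : ℂ)) * (besselJ (n + 1) t : ℂ)

/-!
Write `J_m(t) = π⁻¹ ∫₀^π cos (t sin θ - m θ) dθ`. When `m ≤ (1 - ε) t` the phase has a
single stationary point `θ₀ = arccos (m / t)`, which stays a fixed distance away from `0` and `π`.
The window `|θ - θ₀| ≤ t^(-1/2)` contributes at most `2 t^(-1/2)`; outside it the derivative
`t cos θ - m` of the phase is monotone and at least a constant times `t^(1/2)`, so the
first-derivative (van der Corput) test bounds the two remaining pieces by `O(t^(-1/2))`.
Hence `√t |J_m(t)|` is bounded uniformly in `m ≤ (1 - ε) t`, and `|α_n(t)| ≤ 2 |J_{n+1}(t)|`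
because `n + 1 ≤ t`.
-/

open Real Set MeasureTheory intervalIntegral

theorem abs_integral_cos_le_of_le_abs_deriv {F F' F'' : ℝ → ℝ} {a b lam : ℝ} (hab : a ≤ b)
    (hlam : 0 < lam) (hF : ∀ x ∈ Icc a b, HasDerivAt F (F' x) x)
    (hF' : ∀ x ∈ Icc a b, HasDerivAt F' (F'' x) x) (hF''_cont : ContinuousOn F'' (Icc a b))
    (hF''_nonpos : ∀ x ∈ Icc a b, F'' x ≤ 0) (hF'_ge : ∀ x ∈ Icc a b, lam ≤ |F' x|) :
    |∫ x in a..b, cos (F x)| ≤ 4 / lam := by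
  have hne : ∀ x ∈ Icc a b, F' x ≠ 0 := fun x hx h0 => by
    have := hF'_ge x hx; rw [h0, abs_zero] at this; linarith
  have hF_cont : ContinuousOn F (Icc a b) := HasDerivAt.continuousOn hF
  have hF'_cont : ContinuousOn F' (Icc a b) := HasDerivAt.continuousOn hF'
  have hw_cont : ContinuousOn (fun x => F'' x / F' x ^ 2) (Icc a b) :=
    hF''_cont.div (hF'_cont.pow 2) fun x hx => pow_ne_zero 2 (hne x hx)
  have hintegrable : ∀ {f : ℝ → ℝ}, ContinuousOn f (Icc a b) → IntervalIntegrable f volume a b :=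
    fun hf => (uIcc_of_le hab ▸ hf).intervalIntegrable
  -- integration by parts against `1 / F'`
  have hibp : ∫ x in a..b, cos (F x) =
      sin (F b) / F' b - sin (F a) / F' a + ∫ x in a..b, sin (F x) * (F'' x / F' x ^ 2) := by
    have hcos_int : IntervalIntegrable (fun x => cos (F x)) volume a b :=
      hintegrable (continuous_cos.comp_continuousOn hF_cont)
    have hrem_int : IntervalIntegrable (fun x => sin (F x) * (F'' x / F' x ^ 2)) volume a b :=
      hintegrable ((continuous_sin.comp_continuousOn hF_cont).mul hw_cont)
    rw [← integral_eq_sub_of_hasDerivAt (f := fun x => sin (F x) / F' x)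
      (f' := fun x => cos (F x) - sin (F x) * (F'' x / F' x ^ 2)), integral_sub hcos_int hrem_int]
    · ring
    · intro x hx
      rw [uIcc_of_le hab] at hx
      refine ((hF x hx).sin.div (hF' x hx) (hne x hx)).congr_deriv ?_
      field_simp [hne x hx]
    · exact hcos_int.sub hrem_int
  have hinv_bound : ∀ x ∈ Icc a b, |(F' x)⁻¹| ≤ 1 / lam := fun x hx => by
    rw [abs_inv, one_div]; exact inv_anti₀ hlam (hF'_ge x hx)
  have hbdry : ∀ x ∈ Icc a b, |sin (F x) / F' x| ≤ 1 / lam := fun x hx => by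
    rw [div_eq_mul_inv, abs_mul]
    exact (mul_le_of_le_one_left (abs_nonneg _) (abs_sin_le_one _)).trans (hinv_bound x hx)
  have hrem : |∫ x in a..b, sin (F x) * (F'' x / F' x ^ 2)| ≤ 2 / lam := by
    -- the weight `F'' / F'^2 = (1 / F')'` has a constant sign, so its total mass telescopes
    have hmass : ∫ x in a..b, -(F'' x / F' x ^ 2) = (F' b)⁻¹ - (F' a)⁻¹ := by
      refine integral_eq_sub_of_hasDerivAt (f := fun x => (F' x)⁻¹) (fun x hx => ?_)
        (hintegrable hw_cont.neg)
      rw [uIcc_of_le hab] at hx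
      exact ((hF' x hx).inv (hne x hx)).congr_deriv (neg_div _ _)
    calc |∫ x in a..b, sin (F x) * (F'' x / F' x ^ 2)|
        ≤ ∫ x in a..b, |sin (F x) * (F'' x / F' x ^ 2)| := abs_integral_le_integral_abs hab
      _ ≤ ∫ x in a..b, -(F'' x / F' x ^ 2) := by
        refine integral_mono_on hab ?_ (hintegrable hw_cont.neg) fun x hx => ?_
        · exact hintegrable ((continuous_sin.comp_continuousOn hF_cont).mul hw_cont).abs
        · rw [abs_mul, ← abs_of_nonpos (div_nonpos_of_nonpos_of_nonneg (hF''_nonpos x hx)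
            (sq_nonneg _))]
          exact mul_le_of_le_one_left (abs_nonneg _) (abs_sin_le_one _)
      _ = (F' b)⁻¹ - (F' a)⁻¹ := hmass
      _ ≤ 2 / lam := by
        have := hinv_bound a ⟨le_rfl, hab⟩
        have := hinv_bound b ⟨hab, le_rfl⟩
        linarith [le_abs_self (F' b)⁻¹, neg_abs_le (F' a)⁻¹, add_div 1 1 lam]
  have ha := hbdry a ⟨le_rfl, hab⟩
  have hb := hbdry b ⟨hab, le_rfl⟩
  rw [hibp]
  linarith [add_div 2 2 lam, add_div 1 1 lam, abs_add_le (sin (F b) / F' b - sin (F a) / F' a)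
      (∫ x in a..b, sin (F x) * (F'' x / F' x ^ 2)),
    abs_sub (sin (F b) / F' b) (sin (F a) / F' a)]

theorem sin_le_sin_of_mem_Icc {x ξ : ℝ} (hx : 0 ≤ x) (hξ : ξ ∈ Icc x (π - x)) :
    sin x ≤ sin ξ := by
  rcases le_total ξ (π / 2) with h | h
  · exact sin_le_sin_of_le_of_le_pi_div_two (by linarith [pi_pos]) h hξ.1
  · rw [← sin_pi_sub ξ]
    exact sin_le_sin_of_le_of_le_pi_div_two (by linarith [pi_pos]) (by linarith)
      (by linarith [hξ.2])

theorem mul_le_cos_sub_cos {x y s : ℝ} (hxy : x ≤ y) (hs : ∀ ξ ∈ Icc x y, s ≤ sin ξ) :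
    (y - x) * s ≤ cos x - cos y := by
  have := (convex_Icc x y).image_sub_le_mul_sub_of_deriv_le continuous_cos.continuousOn
    differentiable_cos.differentiableOn (C := -s)
    (fun ξ hξ => by
      rw [interior_Icc] at hξ
      simpa [Real.deriv_cos] using hs ξ (Ioo_subset_Icc_self hξ))
    x (left_mem_Icc.2 hxy) y (right_mem_Icc.2 hxy) hxy
  linarith

theorem abs_integral_cos_sin_sub_le {t m a b lam : ℝ} (ht : 0 ≤ t) (ha : 0 ≤ a) (hab : a ≤ b)
    (hb : b ≤ π) (hlam : 0 < lam) (hgap : ∀ θ ∈ Icc a b, lam ≤ |t * cos θ - m|) :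
    |∫ θ in a..b, cos (t * sin θ - m * θ)| ≤ 4 / lam := by
  refine abs_integral_cos_le_of_le_abs_deriv (F' := fun θ => t * cos θ - m)
    (F'' := fun θ => -(t * sin θ)) hab hlam (fun θ _ => ?_) (fun θ _ => ?_)
    (by fun_prop) (fun θ hθ => ?_) hgap
  · simpa using ((hasDerivAt_sin θ).const_mul t).fun_sub ((hasDerivAt_id θ).const_mul m)
  · simpa using ((hasDerivAt_cos θ).const_mul t).sub_const m
  · exact neg_nonpos.2 (mul_nonneg ht (sin_nonneg_of_nonneg_of_le_pi (ha.trans hθ.1)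
      (hθ.2.trans hb)))

theorem abs_integral_cos_sin_sub_le_of_stationary {t m θ₀ ρ s : ℝ} (ht : 0 < t) (hρ : 0 < ρ)
    (hs : 0 < s) (hc : 0 ≤ θ₀ - ρ) (hd : θ₀ + ρ ≤ π) (hθ₀ : t * cos θ₀ = m)
    (hsin : ∀ ξ ∈ Icc (θ₀ - ρ) (θ₀ + ρ), s ≤ sin ξ) :
    |∫ θ in 0..π, cos (t * sin θ - m * θ)| ≤ 2 * ρ + 8 / (t * (ρ * s)) := by
  set c := θ₀ - ρ
  set d := θ₀ + ρ
  have hlam : 0 < t * (ρ * s) := by positivity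
  have hleft : ρ * s ≤ cos c - cos θ₀ := by
    simpa [c] using mul_le_cos_sub_cos (by linarith : c ≤ θ₀)
      fun ξ hξ => hsin ξ ⟨hξ.1, by linarith [hξ.2]⟩
  have hright : ρ * s ≤ cos θ₀ - cos d := by
    simpa [d] using mul_le_cos_sub_cos (by linarith : θ₀ ≤ d)
      fun ξ hξ => hsin ξ ⟨by linarith [hξ.1], hξ.2⟩
  have hI₁ : |∫ θ in 0..c, cos (t * sin θ - m * θ)| ≤ 4 / (t * (ρ * s)) := by
    refine abs_integral_cos_sin_sub_le ht.le le_rfl hc (by linarith) hlam fun θ hθ => ?_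
    have : cos c ≤ cos θ := cos_le_cos_of_nonneg_of_le_pi hθ.1 (by linarith) hθ.2
    rw [← hθ₀, ← mul_sub, abs_mul, abs_of_pos ht]
    exact mul_le_mul_of_nonneg_left (le_abs.2 (Or.inl (by linarith))) ht.le
  have hI₃ : |∫ θ in d..π, cos (t * sin θ - m * θ)| ≤ 4 / (t * (ρ * s)) := by
    refine abs_integral_cos_sin_sub_le ht.le (by linarith) hd le_rfl hlam fun θ hθ => ?_
    have : cos θ ≤ cos d := cos_le_cos_of_nonneg_of_le_pi (by linarith) hθ.2 hθ.1
    rw [← hθ₀, ← mul_sub, abs_mul, abs_of_pos ht]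
    exact mul_le_mul_of_nonneg_left (le_abs.2 (Or.inr (by linarith))) ht.le
  have hI₂ : |∫ θ in c..d, cos (t * sin θ - m * θ)| ≤ 2 * ρ := by
    have := norm_integral_le_of_norm_le_const (a := c) (b := d) (C := 1)
      (f := fun θ => cos (t * sin θ - m * θ)) fun θ _ => abs_cos_le_one _
    rwa [Real.norm_eq_abs, one_mul, abs_of_nonneg (by linarith : 0 ≤ d - c),
      show d - c = 2 * ρ by ring] at this
  have hintegrable : ∀ u v, IntervalIntegrable (fun θ => cos (t * sin θ - m * θ)) volume u v :=
    fun u v => (by fun_prop : Continuous fun θ => cos (t * sin θ - m * θ)).intervalIntegrable u v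
  rw [← integral_add_adjacent_intervals (hintegrable 0 c) (hintegrable c π),
    ← integral_add_adjacent_intervals (hintegrable c d) (hintegrable d π)]
  have h8 : 8 / (t * (ρ * s)) = 4 / (t * (ρ * s)) + 4 / (t * (ρ * s)) := by ring
  linarith [abs_add_le (∫ θ in 0..c, cos (t * sin θ - m * θ))
      ((∫ θ in c..d, cos (t * sin θ - m * θ)) + ∫ θ in d..π, cos (t * sin θ - m * θ)),
    abs_add_le (∫ θ in c..d, cos (t * sin θ - m * θ)) (∫ θ in d..π, cos (t * sin θ - m * θ))]

theorem abs_integral_cos_sin_sub_le_div_sqrt {ε t m : ℝ} (hε : 0 < ε)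
    (ht : 4 / arccos (1 - ε) ^ 2 ≤ t) (hm : |m| ≤ (1 - ε) * t) :
    |∫ θ in 0..π, cos (t * sin θ - m * θ)| ≤ (2 + 8 / sin (arccos (1 - ε) / 2)) / √t := by
  set a := arccos (1 - ε)
  have ha : 0 < a := arccos_pos.2 (by linarith)
  have ht0 : 0 < t := (by positivity : 0 < 4 / a ^ 2).trans_le ht
  have hμ : |m / t| ≤ 1 - ε := by rwa [abs_div, abs_of_pos ht0, div_le_iff₀ ht0]
  obtain ⟨hμ₁, hμ₂⟩ := abs_le.1 hμ
  set θ₀ := arccos (m / t)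
  have hθ₀a : a ≤ θ₀ := arccos_le_arccos hμ₂
  have hθ₀b : θ₀ ≤ π - a := by rw [← arccos_neg]; exact arccos_le_arccos hμ₁
  -- keeps the window of radius `t^(-1/2)` around `θ₀ ∈ [a, π - a]` inside `[a/2, π - a/2]`
  have hρ : (√t)⁻¹ ≤ a / 2 := by
    rw [inv_le_comm₀ (by positivity) (by positivity), inv_div, le_sqrt (by positivity) ht0.le]
    linarith [div_pow 2 a 2, show (2 : ℝ) ^ 2 = 4 by norm_num]
  have hs : 0 < sin (a / 2) :=
    sin_pos_of_pos_of_lt_pi (half_pos ha) (by linarith [arccos_le_pi (1 - ε), pi_pos])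
  have hcos : t * cos θ₀ = m := by
    rw [cos_arccos (by linarith) (by linarith), mul_div_cancel₀ _ ht0.ne']
  calc |∫ θ in 0..π, cos (t * sin θ - m * θ)|
      ≤ 2 * (√t)⁻¹ + 8 / (t * ((√t)⁻¹ * sin (a / 2))) :=
        abs_integral_cos_sin_sub_le_of_stationary ht0 (by positivity) hs (by linarith)
          (by linarith) hcos fun ξ hξ =>
          sin_le_sin_of_mem_Icc (by positivity) ⟨by linarith [hξ.1], by linarith [hξ.2]⟩
    _ = (2 + 8 / sin (a / 2)) / √t := by
      obtain ⟨u, hu, rfl⟩ : ∃ u, 0 < u ∧ t = u ^ 2 :=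
        ⟨√t, by positivity, (sq_sqrt ht0.le).symm⟩
      rw [sqrt_sq hu.le]
      field_simp

theorem norm_besselAlpha (n : ℕ) (t : ℝ) :
    ‖besselAlpha n t‖ = 2 * ((n + 1) / |t|) * |besselJ (n + 1) t| := by
  simp only [besselAlpha, norm_mul, norm_div, norm_pow, norm_neg, Complex.norm_I, one_pow,
    mul_one, Complex.norm_real, Complex.norm_ofNat, Real.norm_eq_abs]
  norm_cast

theorem exists_sqrt_mul_abs_besselJ_le {ε : ℝ} (hε : 0 < ε) :
    ∃ K t₀ : ℝ, 0 < t₀ ∧ ∀ t ≥ t₀, ∀ n : ℕ, n ≤ (1 - ε) * t → √t * |besselJ n t| ≤ K := by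
  have ha : 0 < arccos (1 - ε) := arccos_pos.2 (by linarith)
  refine ⟨(2 + 8 / sin (arccos (1 - ε) / 2)) / π, 4 / arccos (1 - ε) ^ 2, by positivity,
    fun t ht n hn => ?_⟩
  have ht0 : 0 < t := (by positivity : 0 < 4 / arccos (1 - ε) ^ 2).trans_le ht
  have hI := abs_integral_cos_sin_sub_le_div_sqrt hε ht (m := n)
    (by rwa [Nat.abs_cast])
  calc √t * |besselJ n t| = √t * |∫ θ in 0..π, cos (t * sin θ - n * θ)| / π := by
        rw [besselJ, abs_mul, abs_of_pos (by positivity : 0 < 1 / π)]; ring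
    _ ≤ √t * ((2 + 8 / sin (arccos (1 - ε) / 2)) / √t) / π := by gcongr
    _ = (2 + 8 / sin (arccos (1 - ε) / 2)) / π := by field_simp

/-- For each `δ > 0` there is a constant `C` such that `t |α_{[tλ]}(t)|² ≤ C`
for all `λ ∈ [δ, 1−δ]` and all sufficiently large `t > 0`. -/
theorem besselAlpha_uniform_bound (δ : ℝ) (hδ : 0 < δ) :
    ∃ C t₀ : ℝ, 0 < C ∧ 0 < t₀ ∧ ∀ t : ℝ, t₀ ≤ t →
      ∀ lam : ℝ, δ ≤ lam → lam ≤ 1 - δ →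
        t * ‖besselAlpha (⌊t * lam⌋₊) t‖ ^ 2 ≤ C := by
  obtain ⟨K, t₀, ht₀, hK⟩ := exists_sqrt_mul_abs_besselJ_le (half_pos hδ)
  refine ⟨4 * K ^ 2 + 1, max t₀ (2 / δ), by positivity, lt_max_of_lt_left ht₀, ?_⟩
  intro t ht lam hlam hlam'
  have ht0 : 0 < t := ht₀.trans_le (le_of_max_le_left ht)
  set n := ⌊t * lam⌋₊
  have hn : (n : ℝ) + 1 ≤ (1 - δ / 2) * t := by
    have hfloor : (n : ℝ) ≤ t * lam := Nat.floor_le (mul_pos ht0 (hδ.trans_le hlam)).le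
    have htδ : 2 ≤ t * δ := by
      have := le_of_max_le_right ht; rwa [div_le_iff₀ hδ] at this
    linarith [mul_le_mul_of_nonneg_left hlam' ht0.le]
  have hJ := hK t (le_of_max_le_left ht) (n + 1) (by push_cast; exact hn)
  have hμ : ((n : ℝ) + 1) / t ≤ 1 := by rw [div_le_one ht0]; linarith [mul_pos hδ ht0]
  calc t * ‖besselAlpha n t‖ ^ 2
        = 4 * (((n : ℝ) + 1) / t) ^ 2 * (√t * |besselJ (n + 1) t|) ^ 2 := by
        rw [norm_besselAlpha, abs_of_pos ht0, mul_pow √t, sq_sqrt ht0.le]; ring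
    _ ≤ 4 * 1 ^ 2 * K ^ 2 := by gcongr
    _ ≤ 4 * K ^ 2 + 1 := by linarith
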